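/- arXiv:2307.06010 — 3 statements merged into one kernel-verified Lean document; each statement's English description precedes it below -/
import Mathlib

section
/- Let d ∈ ℕ, κ ∈ ℕ, and let b^i, d^i, m^{i,k} : ℕ₀^d × ℓ¹(ℕ₀^d) → [0,∞) (i ≠ k ∈ {1,…,d}) be nonnegative rate functions satisfying the vanishing conditions, the bound b^i(y,w), d^i(y,w), m^{i,k}(y,w) ≤ L(y_•+1), and the Lipschitz bound |b^i(y,w)−b^i(y,w′)| ≤ L‖w−w′‖₁ (and likewise for d^i, m^{i,k}) for some constant L. Define the κ-truncated rates b^{i,κ}(y,w) = 1_{{y_• ≤ κ}} b^i(y,w), and analogously d^{i,κ} and m^{i,k,κ}. Then for every ν ∈ M₁(ℕ₀^d) there exists a unique map v^κ from [0,∞) to the summable functions on ℕ₀^d such that v^κ(0) = ν; for every y with y_• > κ, v^κ_{y}(t) = ν_{y} for all t; and for every y with y_• ≤ κ the map t ↦ v^κ_{y}(t) is differentiable with (v^κ_{y})'(t) = −v^κ_{y}(t) ∑_{i=1}^d ( b^{i,κ}(y, v^κ(t)) + d^{i,κ}(y, v^κ(t)) + ∑_{k≠i} m^{i,k,κ}(y,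 v^κ(t)) ) + ∑_{i=1}^d ( v^κ_{y−e_i}(t) b^{i,κ}(y−e_i, v^κ(t)) + v^κ_{y+e_i}(t) d^{i,κ}(y+e_i, v^κ(t)) + ∑_{k≠i} v^κ_{y−e_k+e_i}(t) m^{i,k,κ}(y−e_k+e_i, v^κ(t)) ), with the convention that any term indexed by a vector having a negative coordinate is zero. -/
/-!
Only the finitely many coordinates with `y_• ≤ κ` move, so the truncated equation is an
autonomous ODE `u' = F u` in finite dimension. Gain and loss in `F` are finite sums of fluxes
`w z · g(z, w)` whose truncated rates `g` are bounded by `L (κ + 1)` and `L`-Lipschitz in `ℓ¹`;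
hence `F` is Lipschitz on the ball of radius `ρ` with a constant affine in `ρ`, and grows at most
linearly. Linear growth lets Picard–Lindelöf run for a time that does not depend on the starting
point, so restarting it gives a solution on `[0, ∞)`; on a compact time interval two solutions
stay in a common ball, where Gronwall's inequality makes them agree.
-/

open scoped BigOperators

noncomputable section

/-- Total number of particles in a lineage state `y ∈ ℕ₀^d`, i.e. `y_• = ∑ i, y i`. -/
def bullet {d : ℕ} (y : Fin d → ℕ) : ℕ := ∑ i, y i

/-- The `i`-th standard unit vector of `ℕ₀^d`. -/
def eVec {d : ℕ} (i : Fin d) : Fin d → ℕ := Pi.single i 1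

/-- A probability measure on `ℕ₀^d`, identified with its probability mass function. -/
def IsPMF {d : ℕ} (ν : (Fin d → ℕ) → ℝ) : Prop := (∀ y, 0 ≤ ν y) ∧ HasSum ν 1

/-- The `κ`-truncation of a rate function: rates vanish on states `y` with `y_• > κ`. -/
def truncRate {d : ℕ} (κ : ℕ) (f : (Fin d → ℕ) → ((Fin d → ℕ) → ℝ) → ℝ) :
    (Fin d → ℕ) → ((Fin d → ℕ) → ℝ) → ℝ :=
  fun y w => if bullet y ≤ κ then f y w else 0

/-- The right-hand side of the forward equation with rate functions `b, dth, m`, with the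
convention that any term indexed by a vector having a negative coordinate is zero. -/
def fwdRHS {d : ℕ}
    (b dth : Fin d → (Fin d → ℕ) → ((Fin d → ℕ) → ℝ) → ℝ)
    (m : Fin d → Fin d → (Fin d → ℕ) → ((Fin d → ℕ) → ℝ) → ℝ)
    (v : ℝ → (Fin d → ℕ) → ℝ) (t : ℝ) (y : Fin d → ℕ) : ℝ :=
  -(v t y) * (∑ i, (b i y (v t) + dth i y (v t) +
      ∑ k ∈ Finset.univ.filter (fun k => k ≠ i), m i k y (v t)))
    + ∑ i,
      ((if y i = 0 then 0 else v t (y - eVec i) * b i (y - eVec i) (v t))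
        + v t (y + eVec i) * dth i (y + eVec i) (v t)
        + ∑ k ∈ Finset.univ.filter (fun k => k ≠ i),
            (if y k = 0 then 0 else
              v t (y - eVec k + eVec i) * m i k (y - eVec k + eVec i) (v t)))

/-- `v` is a solution of the `κ`-truncated initial value problem (3.2): it takes values in
the summable functions on `ℕ₀^d`, starts from `ν`, is frozen on states with `y_• > κ`, and
on states with `y_• ≤ κ` solves the forward equation for the `κ`-truncated rates. -/
def IsTruncSolution {d : ℕ} (κ : ℕ)
    (b dth : Fin d → (Fin d → ℕ) → ((Fin d → ℕ) → ℝ) → ℝ)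
    (m : Fin d → Fin d → (Fin d → ℕ) → ((Fin d → ℕ) → ℝ) → ℝ)
    (ν : (Fin d → ℕ) → ℝ) (v : ℝ → (Fin d → ℕ) → ℝ) : Prop :=
  v 0 = ν ∧ (∀ t ≥ (0 : ℝ), Summable (v t)) ∧
    (∀ y : Fin d → ℕ, κ < bullet y → ∀ t ≥ (0 : ℝ), v t y = ν y) ∧
    ∀ y : Fin d → ℕ, bullet y ≤ κ → ∀ t ≥ (0 : ℝ),
      HasDerivWithinAt (fun s => v s y)
        (fwdRHS (fun i => truncRate κ (b i)) (fun i => truncRate κ (dth i))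
          (fun i k => truncRate κ (m i k)) v t y)
        (Set.Ici 0) t

open Set Metric
open scoped NNReal Topology

section ODE

variable {E : Type*} [NormedAddCommGroup E] [NormedSpace ℝ E]

lemma exists_nat_mul_le_lt {h t : ℝ} (hh : 0 < h) (ht : 0 ≤ t) :
    ∃ n : ℕ, n * h ≤ t ∧ t < n * h + h := by
  refine ⟨⌊t / h⌋₊, ?_, ?_⟩
  · rw [← le_div_iff₀ hh]
    exact Nat.floor_le (div_nonneg ht hh.le)
  · rw [← add_one_mul, ← div_lt_iff₀ hh]
    exact Nat.lt_floor_add_one _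

lemma exists_nat_mul_lt_le {h t : ℝ} (hh : 0 < h) (ht : 0 < t) :
    ∃ n : ℕ, n * h < t ∧ t ≤ n * h + h := by
  have hceil : 0 < ⌈t / h⌉₊ := Nat.ceil_pos.2 (div_pos ht hh)
  refine ⟨⌈t / h⌉₊ - 1, ?_, ?_⟩
  · rw [Nat.cast_pred hceil, ← lt_div_iff₀ hh, sub_lt_iff_lt_add]
    exact Nat.ceil_lt_add_one (div_nonneg ht.le hh.le)
  · rw [Nat.cast_pred hceil, sub_one_mul, sub_add_cancel, ← div_le_iff₀ hh]
    exact Nat.le_ceil _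

lemma hasDerivWithinAt_Ici_of_forall_Icc {f f' : ℝ → E} {h t : ℝ} (hh : 0 < h)
    (hf : ∀ n : ℕ, ∀ s ∈ Icc (n * h) (n * h + h),
      HasDerivWithinAt f (f' s) (Icc (n * h) (n * h + h)) s)
    (ht : 0 ≤ t) : HasDerivWithinAt f (f' t) (Ici 0) t := by
  obtain ⟨n, hn, hn'⟩ := exists_nat_mul_le_lt hh ht
  have hright : HasDerivWithinAt f (f' t) (Ici t) t :=
    (hf n t ⟨hn, hn'.le⟩).mono_of_mem_nhdsWithin (Icc_mem_nhdsGE_of_mem ⟨hn, hn'⟩)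
  rcases ht.eq_or_lt with rfl | ht
  · exact hright
  obtain ⟨m, hm, hm'⟩ := exists_nat_mul_lt_le hh ht
  have hleft : HasDerivWithinAt f (f' t) (Iic t) t :=
    (hf m t ⟨hm.le, hm'⟩).mono_of_mem_nhdsWithin (Icc_mem_nhdsLE_of_mem ⟨hm, hm'⟩)
  have := hleft.union hright
  rw [Iic_union_Ici, hasDerivWithinAt_univ] at this
  exact this.hasDerivWithinAt

theorem exists_forall_hasDerivWithinAt_Ici_of_uniform_step {v : ℝ → E → E} {h : ℝ} (hh : 0 < h)
    (hstep : ∀ t₀ x₀, ∃ f : ℝ → E, f t₀ = x₀ ∧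
      ∀ t ∈ Icc t₀ (t₀ + h), HasDerivWithinAt f (v t (f t)) (Icc t₀ (t₀ + h)) t)
    (x₀ : E) :
    ∃ u : ℝ → E, u 0 = x₀ ∧ ∀ t, 0 ≤ t → HasDerivWithinAt u (v t (u t)) (Ici 0) t := by
  choose sol sol_start sol_deriv using hstep
  let start : ℕ → E := fun n => Nat.rec x₀ (fun n x => sol (n * h) x ((n + 1 : ℕ) * h)) n
  let piece (n : ℕ) : ℝ → E := sol (n * h) (start n)
  let u (t : ℝ) : E := piece ⌊t / h⌋₊ t
  have u_eq_piece (n : ℕ) : ∀ t ∈ Icc (n * h) (n * h + h), u t = piece n t := by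
    rintro t ⟨ht, ht'⟩
    rcases ht'.lt_or_eq with ht' | rfl
    · have hfloor : ⌊t / h⌋₊ = n := by
        rw [Nat.floor_eq_iff (div_nonneg ((by positivity : (0:ℝ) ≤ n * h).trans ht) hh.le),
          le_div_iff₀ hh, div_lt_iff₀ hh, add_one_mul]
        exact ⟨ht, ht'⟩
      simp only [u, hfloor]
    · rw [show (n : ℝ) * h + h = ((n + 1 : ℕ) : ℝ) * h by push_cast; ring]
      have hfloor : ⌊((n + 1 : ℕ) : ℝ) * h / h⌋₊ = n + 1 := by
        rw [mul_div_cancel_right₀ _ hh.ne', Nat.floor_natCast]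
      simp only [u, hfloor]
      exact sol_start _ _
  refine ⟨u, ?_, fun t ht =>
    hasDerivWithinAt_Ici_of_forall_Icc (f' := fun s => v s (u s)) hh (fun n s hs => ?_) ht⟩
  · rw [u_eq_piece 0 0 (by simp [hh.le])]
    simpa [piece, start] using sol_start 0 x₀
  · rw [u_eq_piece n s hs]
    exact (sol_deriv _ _ s hs).congr (u_eq_piece n) (u_eq_piece n s hs)

theorem ODE_solution_unique_Ici {v : E → E}
    (hlip : ∀ R, ∃ K, LipschitzOnWith K v (closedBall 0 R))
    {f g : ℝ → E} (hf : ∀ t, 0 ≤ t → HasDerivWithinAt f (v (f t)) (Ici 0) t)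
    (hg : ∀ t, 0 ≤ t → HasDerivWithinAt g (v (g t)) (Ici 0) t) (h₀ : f 0 = g 0) :
    EqOn f g (Ici 0) := by
  intro t ht
  have hfc : ContinuousOn f (Icc 0 t) := fun s hs =>
    (hf s hs.1).continuousWithinAt.mono Icc_subset_Ici_self
  have hgc : ContinuousOn g (Icc 0 t) := fun s hs =>
    (hg s hs.1).continuousWithinAt.mono Icc_subset_Ici_self
  obtain ⟨Cf, hCf⟩ := isCompact_Icc.exists_bound_of_continuousOn hfc
  obtain ⟨Cg, hCg⟩ := isCompact_Icc.exists_bound_of_continuousOn hgc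
  obtain ⟨K, hK⟩ := hlip (max Cf Cg)
  refine ODE_solution_unique_of_mem_Icc_right (v := fun _ => v)
    (s := fun _ => closedBall 0 (max Cf Cg))
    (fun _ _ => hK) hfc (fun s hs => (hf s hs.1).mono (Ici_subset_Ici.2 hs.1)) (fun s hs => ?_)
    hgc (fun s hs => (hg s hs.1).mono (Ici_subset_Ici.2 hs.1)) (fun s hs => ?_) h₀ ⟨ht, le_rfl⟩
  · exact mem_closedBall_zero_iff.2 ((hCf s (Ico_subset_Icc_self hs)).trans (le_max_left _ _))
  · exact mem_closedBall_zero_iff.2 ((hCg s (Ico_subset_Icc_self hs)).trans (le_max_right _ _))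

variable [CompleteSpace E] {v : E → E} {A B : ℝ}

/-- On the ball of radius `‖x₀‖ + 1` about `x₀` the field is bounded by `A (2 ‖x₀‖ + 1) + B`,
so Picard–Lindelöf runs for the time `(2 A + B + 1)⁻¹`, whatever `x₀`. -/
lemma exists_forall_hasDerivWithinAt_Icc_of_linear_growth (hA : 0 ≤ A)
    (hgrowth : ∀ x, ‖v x‖ ≤ A * ‖x‖ + B)
    (hlip : ∀ R, ∃ K, LipschitzOnWith K v (closedBall 0 R)) (t₀ : ℝ) (x₀ : E) :
    ∃ f : ℝ → E, f t₀ = x₀ ∧ ∀ t ∈ Icc t₀ (t₀ + (2 * A + B + 1)⁻¹),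
      HasDerivWithinAt f (v (f t)) (Icc t₀ (t₀ + (2 * A + B + 1)⁻¹)) t := by
  have hB : 0 ≤ B := by simpa using (norm_nonneg _).trans (hgrowth 0)
  set h := (2 * A + B + 1)⁻¹ with h_def
  have hh : 0 < h := by positivity
  let r : ℝ≥0 := ⟨‖x₀‖ + 1, by positivity⟩
  have hr : (r : ℝ) = ‖x₀‖ + 1 := rfl
  let C : ℝ≥0 := ⟨A * (2 * ‖x₀‖ + 1) + B, by positivity⟩
  have hC : (C : ℝ) = A * (2 * ‖x₀‖ + 1) + B := rfl
  have hball : closedBall x₀ r ⊆ closedBall 0 (2 * ‖x₀‖ + 1) :=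
    closedBall_subset_closedBall' (by rw [hr, dist_zero_right]; linarith)
  obtain ⟨K, hK⟩ := hlip (2 * ‖x₀‖ + 1)
  have hbound : ∀ x ∈ closedBall x₀ r, ‖v x‖ ≤ C := fun x hx => by
    have := mem_closedBall_zero_iff.1 (hball hx)
    rw [hC]
    exact (hgrowth x).trans (by gcongr)
  refine (IsPicardLindelof.of_time_independent (tmin := t₀) (tmax := t₀ + h) (r := 0)
    (t₀ := ⟨t₀, left_mem_Icc.2 (by linarith)⟩) hbound (hK.mono hball) ?_
    ).exists_eq_forall_mem_Icc_hasDerivWithinAt₀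
  show (C : ℝ) * max (t₀ + h - t₀) (t₀ - t₀) ≤ r - (0 : ℝ≥0)
  rw [hC, hr, add_sub_cancel_left, sub_self, max_eq_left hh.le, NNReal.coe_zero, sub_zero, h_def,
    ← div_eq_mul_inv, div_le_iff₀ (by positivity)]
  nlinarith [norm_nonneg x₀]

theorem exists_forall_hasDerivWithinAt_Ici_of_linear_growth (hA : 0 ≤ A)
    (hgrowth : ∀ x, ‖v x‖ ≤ A * ‖x‖ + B)
    (hlip : ∀ R, ∃ K, LipschitzOnWith K v (closedBall 0 R)) (x₀ : E) :
    ∃ u : ℝ → E, u 0 = x₀ ∧ ∀ t, 0 ≤ t → HasDerivWithinAt u (v (u t)) (Ici 0) t := by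
  have hB : 0 ≤ B := by simpa using (norm_nonneg _).trans (hgrowth 0)
  exact exists_forall_hasDerivWithinAt_Ici_of_uniform_step (v := fun _ => v) (by positivity)
    (exists_forall_hasDerivWithinAt_Icc_of_linear_growth hA hgrowth hlip) x₀

end ODE

namespace ForwardEquation

variable {d κ : ℕ}

abbrev States (d κ : ℕ) := {y : Fin d → ℕ // bullet y ≤ κ}

lemma le_bullet (y : Fin d → ℕ) (i : Fin d) : y i ≤ bullet y :=
  Finset.single_le_sum (fun j _ => Nat.zero_le (y j)) (Finset.mem_univ i)

lemma finite_setOf_bullet_le (d κ : ℕ) : {y : Fin d → ℕ | bullet y ≤ κ}.Finite :=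
  (finite_Iic fun _ => κ).subset fun y hy i => (le_bullet y i).trans hy

instance : Fintype (States d κ) := (finite_setOf_bullet_le d κ).fintype

instance : Nonempty (States d κ) := ⟨⟨0, by simp [bullet]⟩⟩

def extend (ν : (Fin d → ℕ) → ℝ) (u : States d κ → ℝ) (y : Fin d → ℕ) : ℝ :=
  if h : bullet y ≤ κ then u ⟨y, h⟩ else ν y

def restrict (κ : ℕ) (w : (Fin d → ℕ) → ℝ) : States d κ → ℝ := fun p => w p.1

section extend

variable {ν : (Fin d → ℕ) → ℝ} {y : Fin d → ℕ}

lemma extend_of_le (u : States d κ → ℝ) (h : bullet y ≤ κ) : extend ν u y = u ⟨y, h⟩ :=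
  dif_pos h

lemma extend_of_lt (u : States d κ → ℝ) (h : κ < bullet y) : extend ν u y = ν y :=
  dif_neg h.not_ge

lemma extend_restrict {w : (Fin d → ℕ) → ℝ} (hw : ∀ y, κ < bullet y → w y = ν y) :
    extend ν (restrict κ w) = w := by
  funext y
  rcases le_or_gt (bullet y) κ with h | h
  · exact extend_of_le _ h
  · rw [extend_of_lt _ h, hw y h]

lemma summable_extend (hν : Summable ν) (u : States d κ → ℝ) : Summable (extend ν u) :=
  hν.congr_cofinite <| Filter.eventually_cofinite.2 <|
    (finite_setOf_bullet_le d κ).subset fun _ hy => not_lt.1 fun h => hy (extend_of_lt u h).symm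

lemma abs_extend_le (u : States d κ → ℝ) (h : bullet y ≤ κ) : |extend ν u y| ≤ ‖u‖ := by
  rw [extend_of_le u h, ← Real.norm_eq_abs]
  exact norm_le_pi_norm u _

lemma abs_extend_sub_extend_le (u u' : States d κ → ℝ) (y : Fin d → ℕ) :
    |extend ν u y - extend ν u' y| ≤ ‖u - u'‖ := by
  rcases le_or_gt (bullet y) κ with h | h
  · rw [extend_of_le u h, extend_of_le u' h, ← Real.norm_eq_abs]
    exact norm_le_pi_norm (u - u') _
  · rw [extend_of_lt u h, extend_of_lt u' h, sub_self, abs_zero]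
    exact norm_nonneg _

lemma tsum_abs_extend_sub_extend_le (u u' : States d κ → ℝ) :
    ∑' y, |extend ν u y - extend ν u' y| ≤ Fintype.card (States d κ) * ‖u - u'‖ := by
  have hsupp : Function.support (fun y => |extend ν u y - extend ν u' y|) ⊆
      range (Subtype.val : States d κ → _) := by
    intro y hy
    by_contra h
    have hy' : κ < bullet y := not_le.1 fun h' => h ⟨⟨y, h'⟩, rfl⟩
    simp [extend_of_lt _ hy'] at hy
  rw [← Subtype.val_injective.tsum_eq hsupp, tsum_fintype, ← nsmul_eq_mul]
  exact Finset.sum_le_card_nsmul _ _ _ fun p _ => abs_extend_sub_extend_le u u' p.1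

end extend

structure RateBound (κ : ℕ) (M K : ℝ) (g : (Fin d → ℕ) → ((Fin d → ℕ) → ℝ) → ℝ) : Prop where
  abs_le : ∀ y w, Summable w → |g y w| ≤ M
  eq_zero : ∀ y w, κ < bullet y → g y w = 0
  abs_sub_le : ∀ y w w', Summable w → Summable w' →
    |g y w - g y w'| ≤ K * ∑' x, |w x - w' x|

lemma rateBound_truncRate (κ : ℕ) {L : ℝ} {f : (Fin d → ℕ) → ((Fin d → ℕ) → ℝ) → ℝ}
    (hnonneg : ∀ y w, Summable w → 0 ≤ f y w)
    (hgrowth : ∀ y w, Summable w → f y w ≤ L * ((bullet y : ℝ) + 1))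
    (hlip : ∀ y w w', Summable w → Summable w' → |f y w - f y w'| ≤ L * ∑' x, |w x - w' x|) :
    RateBound κ (max L 0 * ((κ : ℝ) + 1)) (max L 0) (truncRate κ f) where
  abs_le y w hw := by
    unfold truncRate
    split_ifs with hy
    · rw [abs_of_nonneg (hnonneg y w hw)]
      refine (hgrowth y w hw).trans ?_
      gcongr
      exact le_max_left _ _
    · simp only [abs_zero]
      positivity
  eq_zero y w hy := if_neg hy.not_ge
  abs_sub_le y w w' hw hw' := by
    unfold truncRate
    split_ifs
    · exact (hlip y w w' hw hw').trans
        (mul_le_mul_of_nonneg_right (le_max_left _ _) (tsum_nonneg fun _ => abs_nonneg _))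
    · simp only [sub_self, abs_zero]
      exact mul_nonneg (le_max_right _ _) (tsum_nonneg fun _ => abs_nonneg _)

/-- The shape `∑ᵢ (birthᵢ + deathᵢ + ∑_{k ≠ i} migrationᵢₖ)` shared by the loss and the gain part
of the forward equation. -/
def transitionSum (a b : Fin d → ℝ) (c : Fin d → Fin d → ℝ) : ℝ :=
  ∑ i, (a i + b i + ∑ k ∈ Finset.univ.filter (fun k => k ≠ i), c i k)

lemma transitionSum_sub (a b a' b' : Fin d → ℝ) (c c' : Fin d → Fin d → ℝ) :
    transitionSum a b c - transitionSum a' b' c' = transitionSum (a - a') (b - b') (c - c') := by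
  rw [transitionSum, transitionSum, transitionSum, ← Finset.sum_sub_distrib]
  refine Finset.sum_congr rfl fun i _ => ?_
  simp only [Pi.sub_apply, Finset.sum_sub_distrib]
  ring

lemma mul_transitionSum (x : ℝ) (a b : Fin d → ℝ) (c : Fin d → Fin d → ℝ) :
    x * transitionSum a b c =
      transitionSum (fun i => x * a i) (fun i => x * b i) (fun i k => x * c i k) := by
  simp only [transitionSum, Finset.mul_sum, mul_add]

lemma abs_transitionSum_le {a b : Fin d → ℝ} {c : Fin d → Fin d → ℝ} {ε : ℝ}
    (ha : ∀ i, |a i| ≤ ε) (hb : ∀ i, |b i| ≤ ε) (hc : ∀ i k, k ≠ i → |c i k| ≤ ε) :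
    |transitionSum a b c| ≤ d * (d + 2) * ε := by
  have hterm (i : Fin d) : |a i + b i + ∑ k ∈ Finset.univ.filter (fun k => k ≠ i), c i k| ≤
      (d + 2) * ε := by
    have hε : 0 ≤ ε := (abs_nonneg _).trans (ha i)
    have hcard : ((Finset.univ.filter (fun k => k ≠ i)).card : ℝ) ≤ d := by
      exact_mod_cast (Finset.card_filter_le _ _).trans (Finset.card_fin d).le
    have hsum : |∑ k ∈ Finset.univ.filter (fun k => k ≠ i), c i k| ≤ d * ε :=
      calc _ ≤ ∑ k ∈ Finset.univ.filter (fun k => k ≠ i), |c i k| := Finset.abs_sum_le_sum_abs _ _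
        _ ≤ (Finset.univ.filter (fun k => k ≠ i)).card • ε :=
          Finset.sum_le_card_nsmul _ _ _ fun k hk => hc i k (Finset.mem_filter.1 hk).2
        _ ≤ d * ε := by rw [nsmul_eq_mul]; gcongr
    calc _ ≤ |a i| + |b i| + |∑ k ∈ Finset.univ.filter (fun k => k ≠ i), c i k| :=
          (abs_add_le _ _).trans (add_le_add_left (abs_add_le _ _) _)
      _ ≤ ε + ε + d * ε := by gcongr <;> simp only [ha, hb]
      _ = (d + 2) * ε := by ring
  calc _ ≤ ∑ i, |a i + b i + ∑ k ∈ Finset.univ.filter (fun k => k ≠ i), c i k| :=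
        Finset.abs_sum_le_sum_abs _ _
    _ ≤ ∑ _i : Fin d, (d + 2) * ε := Finset.sum_le_sum fun i _ => hterm i
    _ = d * (d + 2) * ε := by
      simp only [Finset.sum_const, Finset.card_univ, Fintype.card_fin, nsmul_eq_mul]
      ring

lemma fwdRHS_eq_transitionSum_sub (Bt Dt : Fin d → (Fin d → ℕ) → ((Fin d → ℕ) → ℝ) → ℝ)
    (Mt : Fin d → Fin d → (Fin d → ℕ) → ((Fin d → ℕ) → ℝ) → ℝ)
    (v : ℝ → (Fin d → ℕ) → ℝ) (t : ℝ) (y : Fin d → ℕ) :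
    fwdRHS Bt Dt Mt v t y =
      transitionSum (fun i => if y i = 0 then 0 else v t (y - eVec i) * Bt i (y - eVec i) (v t))
          (fun i => v t (y + eVec i) * Dt i (y + eVec i) (v t))
          (fun i k => if y k = 0 then 0 else
            v t (y - eVec k + eVec i) * Mt i k (y - eVec k + eVec i) (v t)) -
        transitionSum (fun i => v t y * Bt i y (v t)) (fun i => v t y * Dt i y (v t))
          (fun i k => v t y * Mt i k y (v t)) := by
  rw [← mul_transitionSum]
  unfold fwdRHS transitionSum
  ring

section field

variable {ν : (Fin d → ℕ) → ℝ} {M K : ℝ}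
  {Bt Dt : Fin d → (Fin d → ℕ) → ((Fin d → ℕ) → ℝ) → ℝ}
  {Mt : Fin d → Fin d → (Fin d → ℕ) → ((Fin d → ℕ) → ℝ) → ℝ}

/-- Truncation is what makes this bound hold off the states `y_• ≤ κ`, where `extend` is
frozen at `ν` and need not be small. -/
lemma abs_extend_mul_sub_le {g : (Fin d → ℕ) → ((Fin d → ℕ) → ℝ) → ℝ} (hg : RateBound κ M K g)
    (hK : 0 ≤ K) (hν : Summable ν) (u u' : States d κ → ℝ) (z : Fin d → ℕ) :
    |extend ν u z * g z (extend ν u) - extend ν u' z * g z (extend ν u')| ≤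
      (M + ‖u'‖ * (K * Fintype.card (States d κ))) * ‖u - u'‖ := by
  set w := extend ν u
  set w' := extend ν u'
  have hw := summable_extend hν u
  have hw' := summable_extend hν u'
  rcases le_or_gt (bullet z) κ with hz | hz
  · have hlip : |g z w - g z w'| ≤ K * (Fintype.card (States d κ) * ‖u - u'‖) :=
      (hg.abs_sub_le z w w' hw hw').trans
        (mul_le_mul_of_nonneg_left (tsum_abs_extend_sub_extend_le u u') hK)
    calc _ = |(w z - w' z) * g z w + w' z * (g z w - g z w')| := by ring_nf
      _ ≤ |w z - w' z| * |g z w| + |w' z| * |g z w - g z w'| := by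
          rw [← abs_mul, ← abs_mul]
          exact abs_add_le _ _
      _ ≤ ‖u - u'‖ * M + ‖u'‖ * (K * (Fintype.card (States d κ) * ‖u - u'‖)) := by
          gcongr
          · exact abs_extend_sub_extend_le u u' z
          · exact hg.abs_le z w hw
          · exact abs_extend_le u' hz
      _ = _ := by ring
  · have hM : 0 ≤ M := (abs_nonneg _).trans (hg.abs_le z w hw)
    rw [hg.eq_zero z w hz, hg.eq_zero z w' hz, mul_zero, mul_zero, sub_zero, abs_zero]
    positivity

lemma abs_ite_sub_ite_le {p : Prop} [Decidable p] {x x' ε : ℝ} (h : |x - x'| ≤ ε) :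
    |(if p then 0 else x) - (if p then 0 else x')| ≤ ε := by
  split_ifs
  · simpa using (abs_nonneg _).trans h
  · exact h

lemma abs_fwdRHS_extend_sub_le (hB : ∀ i, RateBound κ M K (Bt i))
    (hD : ∀ i, RateBound κ M K (Dt i)) (hM : ∀ i k, k ≠ i → RateBound κ M K (Mt i k))
    (hK : 0 ≤ K) (hν : Summable ν) (u u' : States d κ → ℝ) (y : Fin d → ℕ) :
    |fwdRHS Bt Dt Mt (fun _ => extend ν u) 0 y - fwdRHS Bt Dt Mt (fun _ => extend ν u') 0 y| ≤
      2 * (d * (d + 2) * (M + ‖u'‖ * (K * Fintype.card (States d κ)))) * ‖u - u'‖ := by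
  have flux {g} (hg : RateBound κ M K g) := abs_extend_mul_sub_le hg hK hν u u'
  rw [fwdRHS_eq_transitionSum_sub, fwdRHS_eq_transitionSum_sub, sub_sub_sub_comm, transitionSum_sub, transitionSum_sub]
  refine (abs_sub _ _).trans ?_
  rw [mul_assoc, two_mul, mul_assoc]
  gcongr <;> apply abs_transitionSum_le <;> intros <;> simp only [Pi.sub_apply]
  · exact abs_ite_sub_ite_le (flux (hB _) _)
  · exact flux (hD _) _
  · exact abs_ite_sub_ite_le (flux (hM _ _ ‹_›) _)
  · exact flux (hB _) _
  · exact flux (hD _) _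
  · exact flux (hM _ _ ‹_›) _

variable (κ ν Bt Dt Mt) in
def field (u : States d κ → ℝ) : States d κ → ℝ :=
  fun p => fwdRHS Bt Dt Mt (fun _ => extend ν u) 0 p.1

lemma norm_field_sub_le (hB : ∀ i, RateBound κ M K (Bt i))
    (hD : ∀ i, RateBound κ M K (Dt i)) (hM : ∀ i k, k ≠ i → RateBound κ M K (Mt i k))
    (hK : 0 ≤ K) (hν : Summable ν) (u u' : States d κ → ℝ) :
    ‖field κ ν Bt Dt Mt u - field κ ν Bt Dt Mt u'‖ ≤
      2 * (d * (d + 2) * (M + ‖u'‖ * (K * Fintype.card (States d κ)))) * ‖u - u'‖ :=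
  (pi_norm_le_iff_of_nonempty _).2 fun p =>
    abs_fwdRHS_extend_sub_le hB hD hM hK hν u u' p.1

lemma norm_field_le (hB : ∀ i, RateBound κ M K (Bt i))
    (hD : ∀ i, RateBound κ M K (Dt i)) (hM : ∀ i k, k ≠ i → RateBound κ M K (Mt i k))
    (hK : 0 ≤ K) (hν : Summable ν) (u : States d κ → ℝ) :
    ‖field κ ν Bt Dt Mt u‖ ≤ 2 * (d * (d + 2) * M) * ‖u‖ + ‖field κ ν Bt Dt Mt 0‖ := by
  have := norm_field_sub_le hB hD hM hK hν u 0
  rw [norm_zero, zero_mul, add_zero, sub_zero] at this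
  exact (norm_le_norm_sub_add _ _).trans (add_le_add_left this _)

lemma lipschitzOnWith_field (hB : ∀ i, RateBound κ M K (Bt i))
    (hD : ∀ i, RateBound κ M K (Dt i)) (hM : ∀ i k, k ≠ i → RateBound κ M K (Mt i k))
    (hK : 0 ≤ K) (hν : Summable ν) (R : ℝ) :
    ∃ C, LipschitzOnWith C (field κ ν Bt Dt Mt) (closedBall 0 R) := by
  refine ⟨(2 * (d * (d + 2) * (M + R * (K * Fintype.card (States d κ))))).toNNReal,
    LipschitzOnWith.of_dist_le_mul fun u _ u' hu' => ?_⟩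
  rw [dist_eq_norm, dist_eq_norm]
  refine (norm_field_sub_le hB hD hM hK hν u u').trans
    (mul_le_mul_of_nonneg_right ((?_ : _ ≤ _).trans (Real.le_coe_toNNReal _)) (norm_nonneg _))
  have := mem_closedBall_zero_iff.1 hu'
  gcongr

end field

section solution

variable {b dth : Fin d → (Fin d → ℕ) → ((Fin d → ℕ) → ℝ) → ℝ}
  {m : Fin d → Fin d → (Fin d → ℕ) → ((Fin d → ℕ) → ℝ) → ℝ} {ν : (Fin d → ℕ) → ℝ}

abbrev truncField (κ : ℕ) (ν : (Fin d → ℕ) → ℝ)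
    (b dth : Fin d → (Fin d → ℕ) → ((Fin d → ℕ) → ℝ) → ℝ)
    (m : Fin d → Fin d → (Fin d → ℕ) → ((Fin d → ℕ) → ℝ) → ℝ) :
    (States d κ → ℝ) → States d κ → ℝ :=
  field κ ν (fun i => truncRate κ (b i)) (fun i => truncRate κ (dth i))
    (fun i k => truncRate κ (m i k))

lemma isTruncSolution_extend (hν : Summable ν) {u : ℝ → States d κ → ℝ}
    (h₀ : u 0 = restrict κ ν)
    (hu : ∀ t, 0 ≤ t → HasDerivWithinAt u (truncField κ ν b dth m (u t)) (Ici 0) t) :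
    IsTruncSolution κ b dth m ν (fun t => extend ν (u t)) := by
  refine ⟨?_, fun t _ => summable_extend hν (u t), fun y hy t _ => extend_of_lt _ hy,
    fun y hy t ht => ?_⟩
  · exact (congrArg (extend ν) h₀).trans (extend_restrict fun _ _ => rfl)
  · simp only [extend_of_le _ hy]
    exact hasDerivWithinAt_pi.1 (hu t ht) ⟨y, hy⟩

variable {v : ℝ → (Fin d → ℕ) → ℝ}

lemma _root_.IsTruncSolution.extend_restrict (hv : IsTruncSolution κ b dth m ν v) {t : ℝ}
    (ht : 0 ≤ t) : extend ν (restrict κ (v t)) = v t :=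
  ForwardEquation.extend_restrict fun y hy => hv.2.2.1 y hy t ht

lemma _root_.IsTruncSolution.hasDerivWithinAt_restrict (hv : IsTruncSolution κ b dth m ν v) (t : ℝ)
    (ht : 0 ≤ t) :
    HasDerivWithinAt (fun s => restrict κ (v s)) (truncField κ ν b dth m (restrict κ (v t)))
      (Ici 0) t := by
  refine hasDerivWithinAt_pi.2 fun p => ?_
  have := hv.2.2.2 p.1 p.2 t ht
  rwa [fwdRHS, ← hv.extend_restrict ht] at this

end solution

end ForwardEquation

open ForwardEquation

theorem truncated_forward_equation_existence_uniqueness_general (d : ℕ) (κ : ℕ)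
    (b dth : Fin d → (Fin d → ℕ) → ((Fin d → ℕ) → ℝ) → ℝ)
    (m : Fin d → Fin d → (Fin d → ℕ) → ((Fin d → ℕ) → ℝ) → ℝ)
    (L : ℝ)
    -- the rates are nonnegative on ℓ¹(ℕ₀^d)
    (hb_nonneg : ∀ i y w, Summable w → 0 ≤ b i y w)
    (hd_nonneg : ∀ i y w, Summable w → 0 ≤ dth i y w)
    (hm_nonneg : ∀ i k y w, i ≠ k → Summable w → 0 ≤ m i k y w)
    -- linear growth bound
    (hb_growth : ∀ i y w, Summable w → b i y w ≤ L * ((bullet y : ℝ) + 1))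
    (hd_growth : ∀ i y w, Summable w → dth i y w ≤ L * ((bullet y : ℝ) + 1))
    (hm_growth : ∀ i k y w, i ≠ k → Summable w → m i k y w ≤ L * ((bullet y : ℝ) + 1))
    -- Lipschitz bound in the ℓ¹ norm
    (hb_lip : ∀ i y w w', Summable w → Summable w' →
      |b i y w - b i y w'| ≤ L * ∑' x, |w x - w' x|)
    (hd_lip : ∀ i y w w', Summable w → Summable w' →
      |dth i y w - dth i y w'| ≤ L * ∑' x, |w x - w' x|)
    (hm_lip : ∀ i k y w w', i ≠ k → Summable w → Summable w' →
      |m i k y w - m i k y w'| ≤ L * ∑' x, |w x - w' x|)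
    (ν : (Fin d → ℕ) → ℝ) (hν : IsPMF ν) :
    ∃ v : ℝ → (Fin d → ℕ) → ℝ, IsTruncSolution κ b dth m ν v ∧
      ∀ w : ℝ → (Fin d → ℕ) → ℝ, IsTruncSolution κ b dth m ν w →
        ∀ t ≥ (0 : ℝ), w t = v t := by
  have hν' : Summable ν := hν.2.summable
  have hK : 0 ≤ max L 0 := le_max_right L 0
  have hB i := rateBound_truncRate κ (hb_nonneg i) (hb_growth i) (hb_lip i)
  have hD i := rateBound_truncRate κ (hd_nonneg i) (hd_growth i) (hd_lip i)
  have hM i k (hki : k ≠ i) := rateBound_truncRate κ (hm_nonneg i k · · hki.symm)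
    (hm_growth i k · · hki.symm) (hm_lip i k · · · hki.symm)
  have hlip := lipschitzOnWith_field hB hD hM hK hν'
  obtain ⟨u, hu₀, hu⟩ := exists_forall_hasDerivWithinAt_Ici_of_linear_growth (by positivity)
    (norm_field_le hB hD hM hK hν') hlip (restrict κ ν)
  refine ⟨fun t => extend ν (u t), isTruncSolution_extend hν' hu₀ hu, fun w hw t ht => ?_⟩
  rw [← hw.extend_restrict ht]
  exact congrArg (extend ν) (ODE_solution_unique_Ici hlip hw.hasDerivWithinAt_restrict hu
    (by simp only [hw.1, hu₀]) ht)

/-- Existence and uniqueness for the `κ`-truncated forward equation (3.2): the truncated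
system is a finite-dimensional ODE with locally Lipschitz right-hand side, so it has a
unique solution starting from any `ν ∈ M₁(ℕ₀^d)`. -/
theorem truncated_forward_equation_existence_uniqueness (d : ℕ) (hd : 0 < d) (κ : ℕ)
    (hκ : 0 < κ)
    (b dth : Fin d → (Fin d → ℕ) → ((Fin d → ℕ) → ℝ) → ℝ)
    (m : Fin d → Fin d → (Fin d → ℕ) → ((Fin d → ℕ) → ℝ) → ℝ)
    (L : ℝ)
    -- the rates are nonnegative on ℓ¹(ℕ₀^d)
    (hb_nonneg : ∀ i y w, Summable w → 0 ≤ b i y w)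
    (hd_nonneg : ∀ i y w, Summable w → 0 ≤ dth i y w)
    (hm_nonneg : ∀ i k y w, i ≠ k → Summable w → 0 ≤ m i k y w)
    -- vanishing conditions
    (hd_vanish : ∀ i y w, y i = 0 → dth i y w = 0)
    (hm_vanish : ∀ i k y w, i ≠ k → y i = 0 → m i k y w = 0)
    -- linear growth bound
    (hb_growth : ∀ i y w, Summable w → b i y w ≤ L * ((bullet y : ℝ) + 1))
    (hd_growth : ∀ i y w, Summable w → dth i y w ≤ L * ((bullet y : ℝ) + 1))
    (hm_growth : ∀ i k y w, i ≠ k → Summable w → m i k y w ≤ L * ((bullet y : ℝ) + 1))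
    -- Lipschitz bound in the ℓ¹ norm
    (hb_lip : ∀ i y w w', Summable w → Summable w' →
      |b i y w - b i y w'| ≤ L * ∑' x, |w x - w' x|)
    (hd_lip : ∀ i y w w', Summable w → Summable w' →
      |dth i y w - dth i y w'| ≤ L * ∑' x, |w x - w' x|)
    (hm_lip : ∀ i k y w w', i ≠ k → Summable w → Summable w' →
      |m i k y w - m i k y w'| ≤ L * ∑' x, |w x - w' x|)
    (ν : (Fin d → ℕ) → ℝ) (hν : IsPMF ν) :
    ∃ v : ℝ → (Fin d → ℕ) → ℝ, IsTruncSolution κ b dth m ν v ∧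
      ∀ w : ℝ → (Fin d → ℕ) → ℝ, IsTruncSolution κ b dth m ν w →
        ∀ t ≥ (0 : ℝ), w t = v t :=
  truncated_forward_equation_existence_uniqueness_general d κ b dth m L hb_nonneg hd_nonneg
    hm_nonneg hb_growth hd_growth hm_growth hb_lip hd_lip hm_lip ν hν
end
end

section
/- Equip the space of probability measures on ℕ₀^d with the topology of weak convergence, and define the stochastic domination partial order: μ ≼ ν if and only if for every m ∈ ℕ₀^d, μ({y ∈ ℕ₀^d : y_i ≥ m_i for all i}) ≤ ν({y ∈ ℕ₀^d : y_i ≥ m_i for all i}). If K is a compact subset of the probability measures on ℕ₀^d, then the set ⋃_{ν ∈ K} { μ : μ ≼ ν } = { μ : there exists ν ∈ K with μ ≼ ν } is also compact. -/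
/-!
Stochastic domination bounds the coordinate tails `μ {y | N ≤ y i}` by those of the dominating
measure, and on `ℕ^d` tightness is exactly uniform smallness of these tails. So the set is tight
when `K` is, and Prokhorov's theorem (both directions, `ℕ^d` being Polish) makes its closure
compact. Upper sets of the discrete space `ℕ^d` are clopen, so `μ ↦ μ A` is weakly continuous for
them and the relation `μ ≼ ν` is closed. The set is then the projection of the compact set of
pairs `(μ, ν)` in (its closure) `× K` with `μ ≼ ν`.
-/

open MeasureTheory

noncomputable section

/-- Stochastic domination of probability measures on `ℕ₀^d`: `μ ≼ ν` iff `μ` assigns no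
more mass than `ν` to every upper set `{y : ∀ i, m i ≤ y i}`. -/
def StochDom {d : ℕ} (μ ν : ProbabilityMeasure (Fin d → ℕ)) : Prop :=
  ∀ m : Fin d → ℕ,
    μ {y : Fin d → ℕ | ∀ i, m i ≤ y i} ≤ ν {y : Fin d → ℕ | ∀ i, m i ≤ y i}

open Filter Topology Set
open scoped ENNReal

theorem ProbabilityMeasure.continuous_apply_of_isClopen {Ω : Type*} [MeasurableSpace Ω]
    [TopologicalSpace Ω] [OpensMeasurableSpace Ω] [HasOuterApproxClosed Ω] {E : Set Ω}
    (hE : IsClopen E) : Continuous fun μ : ProbabilityMeasure Ω ↦ μ E :=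
  continuous_iff_continuousAt.2 fun _ ↦
    ProbabilityMeasure.tendsto_measure_of_isClopen_of_tendsto tendsto_id hE

section Tail

variable {ι : Type*} [Fintype ι]

theorem isTightMeasureSet_iff_forall_exists_measure_tail_le {S : Set (Measure (ι → ℕ))} :
    IsTightMeasureSet S ↔
      ∀ ε : ℝ≥0∞, 0 < ε → ∃ N : ℕ, ∀ μ ∈ S, ∀ i, μ {y | N ≤ y i} ≤ ε := by
  rw [isTightMeasureSet_iff_exists_isCompact_measure_compl_le]
  constructor
  · intro h ε hε
    obtain ⟨C, hC, hCS⟩ := h ε hε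
    obtain ⟨b, hb⟩ := hC.finite_of_discrete.bddAbove
    refine ⟨Finset.univ.sup b + 1, fun μ hμ i ↦ (measure_mono fun y hy hyC ↦ ?_).trans (hCS μ hμ)⟩
    have := (hb hyC i).trans (Finset.le_sup (Finset.mem_univ i))
    exact absurd hy (Nat.lt_succ_of_le this).not_ge
  · intro h ε hε
    -- `ε / 0 = ⊤` in `ℝ≥0∞`, so this also covers empty `ι`.
    obtain ⟨N, hN⟩ := h (ε / Fintype.card ι) (ENNReal.div_pos hε.ne' (ENNReal.natCast_ne_top _))
    refine ⟨Set.pi univ fun _ ↦ Iio N, (Set.Finite.pi fun _ ↦ finite_Iio N).isCompact,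
      fun μ hμ ↦ ?_⟩
    have hcompl : (Set.pi univ fun _ ↦ Iio N)ᶜ ⊆ ⋃ i, {y : ι → ℕ | N ≤ y i} := by
      intro y hy
      simpa [Set.mem_pi] using hy
    calc μ (Set.pi univ fun _ ↦ Iio N)ᶜ ≤ ∑ i, μ {y | N ≤ y i} :=
          (measure_mono hcompl).trans (measure_iUnion_fintype_le _ _)
      _ ≤ ∑ _i : ι, ε / Fintype.card ι := Finset.sum_le_sum fun i _ ↦ hN μ hμ i
      _ ≤ ε := by
          rw [Finset.sum_const, Finset.card_univ, nsmul_eq_mul]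
          exact ENNReal.mul_div_le

end Tail

theorem setOf_forall_single_le_eq {ι : Type*} [DecidableEq ι] (i : ι) (N : ℕ) :
    {y : ι → ℕ | ∀ j, (Pi.single i N : ι → ℕ) j ≤ y j} = {y | N ≤ y i} := by
  ext y
  refine ⟨fun h ↦ by simpa using h i, fun h j ↦ ?_⟩
  rcases eq_or_ne j i with rfl | hj
  · simpa using h
  · simp [hj]

section StochDom

variable {d : ℕ}

theorem StochDom.measure_tail_le {μ ν : ProbabilityMeasure (Fin d → ℕ)} (h : StochDom μ ν)
    (i : Fin d) (N : ℕ) :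
    (μ : Measure (Fin d → ℕ)) {y | N ≤ y i} ≤ (ν : Measure (Fin d → ℕ)) {y | N ≤ y i} := by
  have := h (Pi.single i N)
  rw [setOf_forall_single_le_eq] at this
  simpa only [← ProbabilityMeasure.ennreal_coeFn_eq_coeFn_toMeasure, ENNReal.coe_le_coe]

theorem isClosed_setOf_stochDom :
    IsClosed {p : ProbabilityMeasure (Fin d → ℕ) × ProbabilityMeasure (Fin d → ℕ) |
      StochDom p.1 p.2} := by
  simp only [StochDom, ofPred_forall]
  exact isClosed_iInter fun m ↦ isClosed_le
    ((ProbabilityMeasure.continuous_apply_of_isClopen (isClopen_discrete _)).comp continuous_fst)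
    ((ProbabilityMeasure.continuous_apply_of_isClopen (isClopen_discrete _)).comp continuous_snd)

theorem isTightMeasureSet_stochDom_below {K : Set (ProbabilityMeasure (Fin d → ℕ))}
    (hK : IsTightMeasureSet {(ν : Measure (Fin d → ℕ)) | ν ∈ K}) :
    IsTightMeasureSet
      {(μ : Measure (Fin d → ℕ)) | μ ∈ {μ : ProbabilityMeasure _ | ∃ ν ∈ K, StochDom μ ν}} := by
  rw [isTightMeasureSet_iff_forall_exists_measure_tail_le] at hK ⊢
  intro ε hε
  obtain ⟨N, hN⟩ := hK ε hε
  refine ⟨N, ?_⟩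
  rintro _ ⟨μ, ⟨ν, hνK, hμν⟩, rfl⟩ i
  exact (hμν.measure_tail_le i N).trans (hN _ ⟨ν, hνK, rfl⟩ i)

end StochDom

theorem isCompact_stochDom_below_general (d : ℕ)
    (K : Set (ProbabilityMeasure (Fin d → ℕ))) (hK : IsCompact K) :
    IsCompact {μ : ProbabilityMeasure (Fin d → ℕ) | ∃ ν ∈ K, StochDom μ ν} := by
  set S := {μ : ProbabilityMeasure (Fin d → ℕ) | ∃ ν ∈ K, StochDom μ ν}
  have hS : IsCompact (closure S) := isCompact_closure_of_isTightMeasureSet <|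
    isTightMeasureSet_stochDom_below <| isTightMeasureSet_of_isCompact_closure hK.closure
  have hS_eq : S = Prod.fst '' ((closure S ×ˢ K) ∩ {p | StochDom p.1 p.2}) := by
    ext μ
    constructor
    · rintro ⟨ν, hνK, hμν⟩
      exact ⟨(μ, ν), ⟨⟨subset_closure ⟨ν, hνK, hμν⟩, hνK⟩, hμν⟩, rfl⟩
    · rintro ⟨⟨μ, ν⟩, ⟨⟨-, hνK⟩, hμν⟩, rfl⟩
      exact ⟨ν, hνK, hμν⟩
  rw [hS_eq]
  exact ((hS.prod hK).inter_right isClosed_setOf_stochDom).image continuous_fst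

/-- If `K` is a compact set of probability measures on `ℕ₀^d` (with the topology of weak
convergence), then the set of probability measures stochastically dominated by some
element of `K` is also compact. -/
theorem isCompact_stochDom_below (d : ℕ) (hd : 0 < d)
    (K : Set (ProbabilityMeasure (Fin d → ℕ))) (hK : IsCompact K) :
    IsCompact {μ : ProbabilityMeasure (Fin d → ℕ) | ∃ ν ∈ K, StochDom μ ν} :=
  isCompact_stochDom_below_general d K hK
end
end

section
/- Let d ∈ ℕ, λ ∈ [0,∞)^d, let Γ ∈ ℝ^{d×d} satisfy Γ_{ik} ≥ 0 for i ≠ k and ∑_{k} Γ_{ik} = 0 for each i, and let μ̃ : ℝ^d → [0,∞)^d be continuous. Suppose v : [0,∞) → M₁(ℕ₀^d) has every coordinate t ↦ v_{y}(t) differentiable and satisfies, for all y ∈ ℕ₀^d and t ≥ 0, the forward equation v_{y}'(t) = −v_{y}(t) ∑_{i=1}^d ( y_i λ_i + y_i μ̃_i(r(t)) + ∑_{k≠i} y_i Γ_{ik} ) + ∑_{i=1}^d ( (y_i−1) λ_i v_{y−e_i}(t) + (y_i+1) μ̃_i(r(t)) v_{y+e_i}(t) + ∑_{k≠i} (y_i+1)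 Γ_{ik} v_{y−e_k+e_i}(t) ) (terms indexed by vectors with a negative coordinate being zero), where r_i(t) := ∑_{y ∈ ℕ₀^d} y_i v_{y}(t). Assume in addition that for every t ≥ 0 the second moment ∑_{y} (y_•)² v_{y}(t) is finite, and that each r_i is differentiable with r_i'(t) = ∑_{y} y_i v_{y}'(t). Then r satisfies the nonlinear moment equation r_i'(t) = ( λ_i − μ̃_i(r(t)) ) r_i(t) + ∑_{j=1}^d Γ_{ji} r_j(t) for all i ∈ {1,…,d} and t ≥ 0. -/
open scoped BigOperators

noncomputable section

/-- The expected state vector (first moment) `r[v(t)]_i = ∑_y y_i v_y(t)`. -/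
def momentVec {d : ℕ} (v : ℝ → (Fin d → ℕ) → ℝ) (t : ℝ) : Fin d → ℝ :=
  fun i => ∑' y : Fin d → ℕ, (y i : ℝ) * v t y

/-- The right-hand side of the limiting forward equation (2.2) specialized to the simple
MTBDP with moment-mediated mean-field interaction: birth rates `y_i λ_i`, death rates
`y_i μ̃_i(r[v(t)])`, and mutation rates `y_i Γ_{ik}`; terms indexed by vectors with a
negative coordinate are zero. -/
def mfRHS {d : ℕ} (lam : Fin d → ℝ) (Γ : Fin d → Fin d → ℝ)
    (mu : (Fin d → ℝ) → Fin d → ℝ)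
    (v : ℝ → (Fin d → ℕ) → ℝ) (t : ℝ) (y : Fin d → ℕ) : ℝ :=
  -(v t y) * (∑ i, ((y i : ℝ) * lam i + (y i : ℝ) * mu (momentVec v t) i +
      ∑ k ∈ Finset.univ.filter (fun k => k ≠ i), (y i : ℝ) * Γ i k))
    + ∑ i,
      ((if y i = 0 then 0 else ((y i : ℝ) - 1) * lam i * v t (y - eVec i))
        + ((y i : ℝ) + 1) * mu (momentVec v t) i * v t (y + eVec i)
        + ∑ k ∈ Finset.univ.filter (fun k => k ≠ i),
            (if y k = 0 then 0 else
              ((y i : ℝ) + 1) * Γ i k * v t (y - eVec k + eVec i)))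

/-! A transition `y ↦ y + δ` with rate `q y` enters the forward equation as the inflow
`q (y - δ) v (y - δ)` minus the outflow `q y v y`. Shifting the summation index in the inflow
shows that its contribution to `∑ y, y_i v_y'` is `δ_i ∑ y, q y v y`. Since all rates are linear
in `y`, these are again first moments, and finite second moments make every series that
occurs summable. The row-sum condition on `Γ` turns the mutation contributions into
`∑ j, Γ j i r_j`. -/

namespace eVec

variable {d : ℕ}

@[simp] lemma apply_self (j : Fin d) : eVec j j = 1 := Pi.single_eq_same j 1

@[simp] lemma apply_of_ne {j l : Fin d} (h : l ≠ j) : eVec j l = 0 := Pi.single_eq_of_ne h 1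

lemma sub_add_cancel {x : Fin d → ℕ} {j : Fin d} (hx : x j ≠ 0) : x - eVec j + eVec j = x := by
  funext l
  by_cases hl : l = j
  · subst hl; simp; omega
  · simp [hl]

lemma sum_cast_apply_mul (i : Fin d) (f : Fin d → ℝ) : ∑ j, (eVec j i : ℝ) * f j = f i := by
  simp [eVec, Pi.single_apply]

end eVec

lemma hasSum_comp_add_eVec_iff {d : ℕ} {g : (Fin d → ℕ) → ℝ} {a : ℝ} (j : Fin d)
    (hg : ∀ x, x j = 0 → g x = 0) :
    HasSum (fun y => g (y + eVec j)) a ↔ HasSum g a := by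
  refine (add_left_injective (eVec j)).hasSum_iff fun x hx => hg x ?_
  by_contra hxj
  exact hx ⟨x - eVec j, eVec.sub_add_cancel hxj⟩

section Moments

variable {d : ℕ} {V : (Fin d → ℕ) → ℝ}

lemma coord_le_bullet (x : Fin d → ℕ) (i : Fin d) : x i ≤ bullet x :=
  Finset.single_le_sum (fun l _ => Nat.zero_le (x l)) (Finset.mem_univ i)

lemma coord_le_bullet_sq (x : Fin d → ℕ) (i : Fin d) : (x i : ℝ) ≤ (bullet x : ℝ) ^ 2 := by
  exact_mod_cast (coord_le_bullet x i).trans (Nat.le_self_pow two_ne_zero _)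

lemma coord_mul_coord_le_bullet_sq (x : Fin d → ℕ) (i j : Fin d) :
    (x i : ℝ) * x j ≤ (bullet x : ℝ) ^ 2 := by
  exact_mod_cast (Nat.mul_le_mul (coord_le_bullet x i) (coord_le_bullet x j)).trans_eq (sq _).symm

lemma summable_coord_mul_of_bullet_sq (hV0 : ∀ x, 0 ≤ V x)
    (h2 : Summable fun x => (bullet x : ℝ) ^ 2 * V x) (j : Fin d) :
    Summable fun x => (x j : ℝ) * V x :=
  h2.of_nonneg_of_le (fun x => mul_nonneg (Nat.cast_nonneg _) (hV0 x))
    fun x => mul_le_mul_of_nonneg_right (coord_le_bullet_sq x j) (hV0 x)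

lemma summable_coord_mul_coord_mul_of_bullet_sq (hV0 : ∀ x, 0 ≤ V x)
    (h2 : Summable fun x => (bullet x : ℝ) ^ 2 * V x) (i j : Fin d) :
    Summable fun x => (x i : ℝ) * x j * V x :=
  h2.of_nonneg_of_le (fun x => mul_nonneg (by positivity) (hV0 x))
    fun x => mul_le_mul_of_nonneg_right (coord_mul_coord_le_bullet_sq x i j) (hV0 x)

lemma hasSum_coord_add_mul_coord_mul (hV0 : ∀ x, 0 ≤ V x)
    (h2 : Summable fun x => (bullet x : ℝ) ^ 2 * V x) (i j : Fin d) (a c : ℝ) :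
    HasSum (fun x => ((x i : ℝ) + a) * x j * c * V x)
      (c * ((∑' x, (x i : ℝ) * x j * V x) + a * ∑' x, (x j : ℝ) * V x)) :=
  (((summable_coord_mul_coord_mul_of_bullet_sq hV0 h2 i j).hasSum.add
    ((summable_coord_mul_of_bullet_sq hV0 h2 j).hasSum.mul_left a)).mul_left c).congr_fun
    fun x => by ring

lemma hasSum_coord_mul_sub_outflow (hV0 : ∀ x, 0 ≤ V x)
    (h2 : Summable fun x => (bullet x : ℝ) ^ 2 * V x) {i j : Fin d} {a c : ℝ}
    {inflow : (Fin d → ℕ) → ℝ}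
    (hin : HasSum (fun y => (y i : ℝ) * inflow y)
      (c * ((∑' x, (x i : ℝ) * x j * V x) + a * ∑' x, (x j : ℝ) * V x))) :
    HasSum (fun y => (y i : ℝ) * (inflow y - V y * ((y j : ℝ) * c)))
      (a * c * ∑' x, (x j : ℝ) * V x) := by
  set P := ∑' x, (x i : ℝ) * x j * V x
  set R := ∑' x, (x j : ℝ) * V x
  have hout := hasSum_coord_add_mul_coord_mul hV0 h2 i j 0 c
  rw [show a * c * R = c * (P + a * R) - c * (P + 0 * R) by ring]
  exact (hin.sub hout).congr_fun fun y => by ring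

lemma hasSum_coord_mul_birth (hV0 : ∀ x, 0 ≤ V x)
    (h2 : Summable fun x => (bullet x : ℝ) ^ 2 * V x) (i j : Fin d) (c : ℝ) :
    HasSum (fun y => (y i : ℝ) * ((if y j = 0 then 0 else ((y j : ℝ) - 1) * c * V (y - eVec j))
        - V y * ((y j : ℝ) * c)))
      ((eVec j i : ℝ) * c * ∑' x, (x j : ℝ) * V x) := by
  refine hasSum_coord_mul_sub_outflow hV0 h2 ?_
  rw [← hasSum_comp_add_eVec_iff j fun x hx => by simp [hx]]
  exact (hasSum_coord_add_mul_coord_mul hV0 h2 i j _ c).congr_fun fun x => by simp; ring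

lemma hasSum_coord_mul_death (hV0 : ∀ x, 0 ≤ V x)
    (h2 : Summable fun x => (bullet x : ℝ) ^ 2 * V x) (i j : Fin d) (c : ℝ) :
    HasSum (fun y => (y i : ℝ) * (((y j : ℝ) + 1) * c * V (y + eVec j) - V y * ((y j : ℝ) * c)))
      (-(eVec j i : ℝ) * c * ∑' x, (x j : ℝ) * V x) := by
  refine hasSum_coord_mul_sub_outflow hV0 h2 ?_
  exact ((hasSum_comp_add_eVec_iff j fun x hx => by simp [hx]).2
    (hasSum_coord_add_mul_coord_mul hV0 h2 i j (-eVec j i) c)).congr_fun fun y => by simp; ring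

lemma hasSum_coord_mul_mutation (hV0 : ∀ x, 0 ≤ V x)
    (h2 : Summable fun x => (bullet x : ℝ) ^ 2 * V x) (i : Fin d) {j k : Fin d} (hkj : k ≠ j)
    (c : ℝ) :
    HasSum (fun y => (y i : ℝ) *
        ((if y k = 0 then 0 else ((y j : ℝ) + 1) * c * V (y - eVec k + eVec j))
          - V y * ((y j : ℝ) * c)))
      (((eVec k i : ℝ) - eVec j i) * c * ∑' x, (x j : ℝ) * V x) := by
  refine hasSum_coord_mul_sub_outflow hV0 h2 ?_
  have hshift := (hasSum_comp_add_eVec_iff j fun x hx => by simp [hx]).2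
    (hasSum_coord_add_mul_coord_mul hV0 h2 i j (eVec k i - eVec j i) c)
  rw [← hasSum_comp_add_eVec_iff k fun x hx => by simp [hx]]
  exact hshift.congr_fun fun z => by simp [hkj.symm]; ring

end Moments

lemma mfRHS_eq_sum {d : ℕ} (lam : Fin d → ℝ) (Γ : Fin d → Fin d → ℝ)
    (mu : (Fin d → ℝ) → Fin d → ℝ) (v : ℝ → (Fin d → ℕ) → ℝ) (t : ℝ) (y : Fin d → ℕ) :
    mfRHS lam Γ mu v t y = ∑ j,
      (((if y j = 0 then 0 else ((y j : ℝ) - 1) * lam j * v t (y - eVec j))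
          - v t y * ((y j : ℝ) * lam j))
        + (((y j : ℝ) + 1) * mu (momentVec v t) j * v t (y + eVec j)
          - v t y * ((y j : ℝ) * mu (momentVec v t) j))
        + ∑ k ∈ Finset.univ.filter (fun k => k ≠ j),
          ((if y k = 0 then 0 else ((y j : ℝ) + 1) * Γ j k * v t (y - eVec k + eVec j))
            - v t y * ((y j : ℝ) * Γ j k))) := by
  rw [mfRHS, Finset.mul_sum, ← Finset.sum_add_distrib]
  refine Finset.sum_congr rfl fun j _ => ?_
  rw [Finset.sum_sub_distrib, ← Finset.mul_sum _ _ (v t y)]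
  ring

lemma sum_jump_moments {d : ℕ} (lam m r : Fin d → ℝ) (Γ : Fin d → Fin d → ℝ)
    (hΓ_row : ∀ j, ∑ k, Γ j k = 0) (i : Fin d) :
    ∑ j, ((eVec j i : ℝ) * lam j * r j + -(eVec j i : ℝ) * m j * r j
        + ∑ k ∈ Finset.univ.filter (fun k => k ≠ j), ((eVec k i : ℝ) - eVec j i) * Γ j k * r j)
      = (lam i - m i) * r i + ∑ j, Γ j i * r j := by
  have hmut : ∀ j, ∑ k ∈ Finset.univ.filter (fun k => k ≠ j),
      ((eVec k i : ℝ) - eVec j i) * Γ j k * r j = Γ j i * r j := by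
    intro j
    rw [Finset.sum_filter_of_ne fun k _ hk => by rintro rfl; simp at hk]
    simp only [sub_mul, Finset.sum_sub_distrib, mul_assoc, eVec.sum_cast_apply_mul,
      ← Finset.mul_sum, ← Finset.sum_mul, hΓ_row, zero_mul, mul_zero, sub_zero]
  simp only [hmut]
  simp only [Finset.sum_add_distrib, mul_assoc, neg_mul, Finset.sum_neg_distrib,
    eVec.sum_cast_apply_mul]
  ring

lemma hasSum_coord_mul_mfRHS {d : ℕ} (lam : Fin d → ℝ) (Γ : Fin d → Fin d → ℝ)
    (hΓ_row : ∀ j, ∑ k, Γ j k = 0) (mu : (Fin d → ℝ) → Fin d → ℝ)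
    (v : ℝ → (Fin d → ℕ) → ℝ) (t : ℝ) (hV0 : ∀ y, 0 ≤ v t y)
    (h2 : Summable fun y => (bullet y : ℝ) ^ 2 * v t y) (i : Fin d) :
    HasSum (fun y => (y i : ℝ) * mfRHS lam Γ mu v t y)
      ((lam i - mu (momentVec v t) i) * momentVec v t i + ∑ j, Γ j i * momentVec v t j) := by
  rw [← sum_jump_moments lam (mu (momentVec v t)) (momentVec v t) Γ hΓ_row i]
  refine (hasSum_sum fun j _ =>
    ((hasSum_coord_mul_birth hV0 h2 i j (lam j)).add
      (hasSum_coord_mul_death hV0 h2 i j (mu (momentVec v t) j))).add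
    (hasSum_sum fun k hk => hasSum_coord_mul_mutation hV0 h2 i
      (Finset.mem_filter.1 hk).2 (Γ j k))).congr_fun fun y => ?_
  simp only [mfRHS_eq_sum, Finset.mul_sum, mul_add]

theorem moment_closure_general (d : ℕ)
    (lam : Fin d → ℝ)
    (Γ : Fin d → Fin d → ℝ)
    (hΓ_row : ∀ i, ∑ k, Γ i k = 0)
    (mu : (Fin d → ℝ) → Fin d → ℝ)
    (v : ℝ → (Fin d → ℕ) → ℝ) (vd : ℝ → (Fin d → ℕ) → ℝ)
    -- `v` takes values in `M₁(ℕ₀^d)`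
    (hv_pmf : ∀ t ≥ (0 : ℝ), IsPMF (v t))
    -- `v` satisfies the forward equation
    (hv_fwd : ∀ y : Fin d → ℕ, ∀ t ≥ (0 : ℝ), vd t y = mfRHS lam Γ mu v t y)
    -- finite second moments
    (hv_mom2 : ∀ t ≥ (0 : ℝ), Summable (fun y : Fin d → ℕ => ((bullet y : ℝ)) ^ 2 * v t y))
    -- the first moments are differentiable, with termwise-differentiated derivative
    (hr_deriv : ∀ i : Fin d, ∀ t ≥ (0 : ℝ),
      HasDerivWithinAt (fun s => momentVec v s i)
        (∑' y : Fin d → ℕ, (y i : ℝ) * vd t y) (Set.Ici 0) t) :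
    ∀ i : Fin d, ∀ t ≥ (0 : ℝ),
      HasDerivWithinAt (fun s => momentVec v s i)
        ((lam i - mu (momentVec v t) i) * momentVec v t i +
          ∑ j, Γ j i * momentVec v t j)
        (Set.Ici 0) t := by
  intro i t ht
  have hfwd : ∀ y, vd t y = mfRHS lam Γ mu v t y := fun y => hv_fwd y t ht
  have hmoment := hasSum_coord_mul_mfRHS lam Γ hΓ_row mu v t (hv_pmf t ht).1 (hv_mom2 t ht) i
  simpa only [hfwd, hmoment.tsum_eq] using hr_deriv i t ht

/-- Moment closure (equation (4.1)): if `v` solves the forward equation of the simple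
MTBDP with moment-mediated mean-field interaction, has finite second moments, and its
first moment vector is differentiable with derivative obtained by termwise
differentiation, then the first moment vector `r(t) = r[v(t)]` satisfies the nonlinear
moment equation `r_i' = (λ_i − μ̃_i(r)) r_i + ∑_j Γ_{ji} r_j`. -/
theorem moment_closure (d : ℕ) (hd : 0 < d)
    (lam : Fin d → ℝ) (hlam : ∀ i, 0 ≤ lam i)
    (Γ : Fin d → Fin d → ℝ)
    (hΓ_off : ∀ i k, i ≠ k → 0 ≤ Γ i k)
    (hΓ_row : ∀ i, ∑ k, Γ i k = 0)
    (mu : (Fin d → ℝ) → Fin d → ℝ)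
    (hmu_cont : Continuous mu) (hmu_nonneg : ∀ x i, 0 ≤ mu x i)
    (v : ℝ → (Fin d → ℕ) → ℝ) (vd : ℝ → (Fin d → ℕ) → ℝ)
    -- `v` takes values in `M₁(ℕ₀^d)`
    (hv_pmf : ∀ t ≥ (0 : ℝ), IsPMF (v t))
    -- every coordinate of `v` is differentiable with derivative `vd`
    (hv_deriv : ∀ y : Fin d → ℕ, ∀ t ≥ (0 : ℝ),
      HasDerivWithinAt (fun s => v s y) (vd t y) (Set.Ici 0) t)
    -- `v` satisfies the forward equation
    (hv_fwd : ∀ y : Fin d → ℕ, ∀ t ≥ (0 : ℝ), vd t y = mfRHS lam Γ mu v t y)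
    -- finite second moments
    (hv_mom2 : ∀ t ≥ (0 : ℝ), Summable (fun y : Fin d → ℕ => ((bullet y : ℝ)) ^ 2 * v t y))
    -- the first moments are differentiable, with termwise-differentiated derivative
    (hr_deriv : ∀ i : Fin d, ∀ t ≥ (0 : ℝ),
      HasDerivWithinAt (fun s => momentVec v s i)
        (∑' y : Fin d → ℕ, (y i : ℝ) * vd t y) (Set.Ici 0) t) :
    ∀ i : Fin d, ∀ t ≥ (0 : ℝ),
      HasDerivWithinAt (fun s => momentVec v s i)
        ((lam i - mu (momentVec v t) i) * momentVec v t i +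
          ∑ j, Γ j i * momentVec v t j)
        (Set.Ici 0) t :=
  moment_closure_general d lam Γ hΓ_row mu v vd hv_pmf hv_fwd hv_mom2 hr_deriv
end
end
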